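/- Let (V,q) be a finite weighted graph satisfying the curvature condition CD(K,∞) for some K ≥ 0, and let (u_t)_{t≥0} solve ∂_t u_t = Δu_t + Γu_t with ‖Γu_0‖_∞ ≤ q_min/2. Then for all t ≥ 0, ‖Γu_t‖_∞ ≤ e^{−2Kt}‖Γu_0‖_∞. In particular |u_t(y) − u_t(x)| ≤ 1 whenever q(x,y) > 0. -/

import Mathlib

open Finset Real

/-- Graph Laplacian on a finite weighted graph. -/
noncomputable def glap {V : Type*} [Fintype V] (q : V → V → ℝ) (f : V → ℝ) (x : V) : ℝ :=
  ∑ y, q x y * (f y - f x)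

/-- Carré du champ operator Γ(f,g). -/
noncomputable def gGammaBil {V : Type*} [Fintype V] (q : V → V → ℝ) (f g : V → ℝ) (x : V) : ℝ :=
  (1 / 2) * ∑ y, q x y * (f y - f x) * (g y - g x)

/-- Carré du champ Γf = Γ(f,f). -/
noncomputable def gGamma {V : Type*} [Fintype V] (q : V → V → ℝ) (f : V → ℝ) (x : V) : ℝ :=
  gGammaBil q f f x

/-- Iterated carré du champ Γ₂f = (ΔΓf − 2Γ(f,Δf))/2. -/
noncomputable def gGammaTwo {V : Type*} [Fintype V] (q : V → V → ℝ) (f : V → ℝ) (x : V) : ℝ :=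
  (glap q (gGamma q f) x - 2 * gGammaBil q f (glap q f) x) / 2

open Filter Topology

section aux
variable {V : Type*} [Fintype V]

lemma gGamma_nonneg (q : V → V → ℝ) (hq : ∀ x y, 0 ≤ q x y) (f : V → ℝ) (x : V) :
    0 ≤ gGamma q f x := by
  unfold gGamma gGammaBil
  apply mul_nonneg (by norm_num)
  apply Finset.sum_nonneg
  intro y _
  nlinarith [hq x y, mul_self_nonneg (f y - f x)]

lemma gGamma_single (q : V → V → ℝ) (hq : ∀ x y, 0 ≤ q x y) (f : V → ℝ) (x y : V) :
    q x y * (f y - f x) * (f y - f x) ≤ 2 * gGamma q f x := by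
  unfold gGamma gGammaBil
  have h := Finset.single_le_sum (f := fun z => q x z * (f z - f x) * (f z - f x))
    (fun z _ => by nlinarith [hq x z, mul_self_nonneg (f z - f x)]) (Finset.mem_univ y)
  linarith

lemma key_estimate (q : V → V → ℝ) (hq : ∀ x y, 0 ≤ q x y) (qmin K : ℝ) (hK : 0 ≤ K)
    (hqmin_pos : 0 < qmin) (hqmin : ∀ x y, 0 < q x y → qmin ≤ q x y)
    (hCD : ∀ f : V → ℝ, ∀ x, K * gGamma q f x ≤ gGammaTwo q f x)
    (f : V → ℝ) (x : V) (hmax : ∀ y, gGamma q f y ≤ gGamma q f x)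
    (η : ℝ) (hη0 : 0 ≤ η) (hη1 : η ≤ qmin / 2) (hx : gGamma q f x ≤ qmin / 2 + η) :
    ∑ y, q x y * (f y - f x) * ((glap q f y + gGamma q f y) - (glap q f x + gGamma q f x))
      ≤ -(2 * K) * gGamma q f x + η * ∑ p : V, ∑ z : V, q p z := by
  have hsplit : ∑ y, q x y * (f y - f x) * ((glap q f y + gGamma q f y) - (glap q f x + gGamma q f x))
      = (∑ y, q x y * (f y - f x) * (glap q f y - glap q f x))
        + ∑ y, q x y * (f y - f x) * (gGamma q f y - gGamma q f x) := by
    rw [← Finset.sum_add_distrib]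
    exact Finset.sum_congr rfl fun y _ => by ring
  have e1 : ∑ y, q x y * (f y - f x) * (glap q f y - glap q f x)
      = 2 * gGammaBil q f (glap q f) x := by
    unfold gGammaBil; ring
  have e2 : 2 * gGammaBil q f (glap q f) x
      ≤ glap q (gGamma q f) x - 2 * (K * gGamma q f x) := by
    have h := hCD f x
    unfold gGammaTwo at h
    linarith
  have e3 : glap q (gGamma q f) x + ∑ y, q x y * (f y - f x) * (gGamma q f y - gGamma q f x)
      = ∑ y, q x y * (gGamma q f y - gGamma q f x) * (1 + (f y - f x)) := by
    unfold glap
    rw [← Finset.sum_add_distrib]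
    exact Finset.sum_congr rfl fun y _ => by ring
  have hΓx0 : 0 ≤ gGamma q f x := gGamma_nonneg q hq f x
  have term : ∀ y, q x y * (gGamma q f y - gGamma q f x) * (1 + (f y - f x))
      ≤ q x y * (η / qmin) * gGamma q f x := by
    intro y
    rcases eq_or_lt_of_le (hq x y) with h0 | hpos
    · simp [← h0]
    · have hqm := hqmin x y hpos
      have hd2 : q x y * (f y - f x) * (f y - f x) ≤ 2 * gGamma q f x := gGamma_single q hq f x y
      have hΓy0 : 0 ≤ gGamma q f y := gGamma_nonneg q hq f y
      have hΓyx : gGamma q f y ≤ gGamma q f x := hmax y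
      set d := f y - f x with hd
      have h1 : qmin * (d * d) ≤ qmin + 2 * η := by nlinarith [mul_self_nonneg d]
      have h2 : -(qmin + η) ≤ qmin * d := by
        nlinarith [sq_nonneg (qmin * d + qmin + η), sq_nonneg η]
      have hcancel : qmin * (η / qmin) = η := by field_simp
      have hB : 0 ≤ 1 + d + η / qmin := by nlinarith
      have hεq : 0 ≤ η / qmin := div_nonneg hη0 hqmin_pos.le
      have h3 : (gGamma q f y - gGamma q f x) * (1 + d) ≤ (η / qmin) * gGamma q f x := by
        nlinarith [mul_nonneg (sub_nonneg.mpr hΓyx) hB, mul_nonneg hεq hΓy0]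
      nlinarith [mul_le_mul_of_nonneg_left h3 (hq x y)]
  have hsum : ∑ y, q x y * (gGamma q f y - gGamma q f x) * (1 + (f y - f x))
      ≤ ∑ y, q x y * (η / qmin) * gGamma q f x :=
    Finset.sum_le_sum fun y _ => term y
  have hS : ∑ y, q x y * (η / qmin) * gGamma q f x
      = (η / qmin) * gGamma q f x * ∑ y, q x y := by
    rw [Finset.mul_sum]
    exact Finset.sum_congr rfl fun y _ => by ring
  have hSQ : ∑ y, q x y ≤ ∑ p : V, ∑ z : V, q p z :=
    Finset.single_le_sum (f := fun p => ∑ z : V, q p z)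
      (fun p _ => Finset.sum_nonneg fun z _ => hq p z) (Finset.mem_univ x)
  have hS0 : 0 ≤ ∑ y, q x y := Finset.sum_nonneg fun y _ => hq x y
  have hΓqmin : gGamma q f x ≤ qmin := by linarith
  have hεq : 0 ≤ η / qmin := div_nonneg hη0 hqmin_pos.le
  have hmm : gGamma q f x * (∑ y, q x y) ≤ qmin * ∑ p : V, ∑ z : V, q p z :=
    mul_le_mul hΓqmin hSQ hS0 hqmin_pos.le
  have hfinal : (η / qmin) * gGamma q f x * (∑ y, q x y) ≤ η * ∑ p : V, ∑ z : V, q p z := by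
    have h4 : (η / qmin) * (gGamma q f x * ∑ y, q x y) ≤ (η / qmin) * (qmin * ∑ p : V, ∑ z : V, q p z) :=
      mul_le_mul_of_nonneg_left hmm hεq
    have h5 : (η / qmin) * (qmin * ∑ p : V, ∑ z : V, q p z) = η * ∑ p : V, ∑ z : V, q p z := by
      field_simp
    calc (η / qmin) * gGamma q f x * (∑ y, q x y)
        = (η / qmin) * (gGamma q f x * ∑ y, q x y) := by ring
      _ ≤ (η / qmin) * (qmin * ∑ p : V, ∑ z : V, q p z) := h4
      _ = η * ∑ p : V, ∑ z : V, q p z := h5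
  linarith [hsplit, e1, e2, e3, hsum, hS ▸ hsum, hfinal]

lemma hasDeriv_gGamma (q : V → V → ℝ) (u : ℝ → V → ℝ)
    (hu : ∀ t ∈ Set.Ici (0:ℝ), ∀ x, HasDerivWithinAt (fun s => u s x)
      (glap q (u t) x + gGamma q (u t) x) (Set.Ici 0) t)
    {t : ℝ} (ht : t ∈ Set.Ici (0:ℝ)) (j : V) :
    HasDerivWithinAt (fun s => gGamma q (u s) j)
      (∑ y, q j y * (u t y - u t j) *
        ((glap q (u t) y + gGamma q (u t) y) - (glap q (u t) j + gGamma q (u t) j)))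
      (Set.Ici 0) t := by
  have hfun : (fun s => gGamma q (u s) j)
      = fun s => (1/2) * ∑ y, q j y * (u s y - u s j) * (u s y - u s j) := rfl
  rw [hfun]
  set g : V → ℝ := fun y => glap q (u t) y + gGamma q (u t) y with hg
  have each : ∀ y ∈ Finset.univ, HasDerivWithinAt
      (fun s => q j y * (u s y - u s j) * (u s y - u s j))
      (q j y * ((g y - g j) * (u t y - u t j) + (u t y - u t j) * (g y - g j)))
      (Set.Ici 0) t := by
    intro y _
    have hdiff : HasDerivWithinAt (fun s => u s y - u s j) (g y - g j) (Set.Ici 0) t :=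
      (hu t ht y).sub (hu t ht j)
    have := (hdiff.mul hdiff).const_mul (q j y)
    simpa [mul_assoc] using this
  have hsum := HasDerivWithinAt.fun_sum each
  have := hsum.const_mul (1/2 : ℝ)
  refine this.congr_deriv ?_
  rw [Finset.mul_sum]
  exact Finset.sum_congr rfl fun y _ => by ring

end aux


lemma eventually_slope_sup'_lt {ι : Type*} (s : Finset ι) (hs : s.Nonempty)
    (g : ι → ℝ → ℝ) (d : ι → ℝ) (x r : ℝ)
    (hg : ∀ j ∈ s, HasDerivWithinAt (g j) (d j) (Set.Ici x) x)
    (hr : ∀ j ∈ s, g j x = s.sup' hs (fun i => g i x) → d j < r) :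
    ∀ᶠ z in nhdsWithin x (Set.Ioi x), slope (fun t => s.sup' hs (fun i => g i t)) x z < r := by
  set F : ℝ → ℝ := fun t => s.sup' hs (fun i => g i t) with hF
  have key : ∀ j ∈ s, ∀ᶠ z in nhdsWithin x (Set.Ioi x), (g j z - F x) / (z - x) < r := by
    intro j hj
    have hle : g j x ≤ F x := Finset.le_sup' (fun i => g i x) hj
    rcases eq_or_lt_of_le hle with hcase | hcase
    · have htend : Tendsto (slope (g j) x) (nhdsWithin x (Set.Ioi x)) (nhds (d j)) := by
        have h1 := hasDerivWithinAt_iff_tendsto_slope.mp (hg j hj)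
        rw [Set.Ici_sdiff_left] at h1
        exact h1
      have hev := htend.eventually_lt_const (hr j hj hcase)
      filter_upwards [hev] with z hz
      rw [slope_def_field, hcase] at hz
      exact hz
    · have hcont : Tendsto (g j) (nhdsWithin x (Set.Ioi x)) (nhds (g j x)) :=
        ((hg j hj).continuousWithinAt).mono_left
          (nhdsWithin_mono x Set.Ioi_subset_Ici_self)
      set δ := (F x - g j x) / 2 with hδ
      have hδpos : 0 < δ := by simp only [hδ]; linarith
      have h1 : ∀ᶠ z in nhdsWithin x (Set.Ioi x), g j z < F x - δ :=
        hcont.eventually_lt_const (by simp only [hδ]; linarith)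
      have h2 : ∀ᶠ z in nhdsWithin x (Set.Ioi x), z - x < δ / (|r| + 1) := by
        have htends : Tendsto (fun z : ℝ => z - x) (nhdsWithin x (Set.Ioi x)) (nhds 0) := by
          have h : Tendsto (fun z : ℝ => z - x) (nhds x) (nhds (x - x)) :=
            Filter.Tendsto.sub tendsto_id tendsto_const_nhds
          rw [sub_self] at h
          exact tendsto_nhdsWithin_of_tendsto_nhds h
        exact htends.eventually_lt_const (by positivity)
      filter_upwards [h1, h2, self_mem_nhdsWithin] with z hz1 hz2 hz3
      have hzx : 0 < z - x := sub_pos.mpr hz3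
      have e1 : -|r| * (z - x) ≤ r * (z - x) :=
        mul_le_mul_of_nonneg_right (neg_abs_le r) hzx.le
      have e2 : |r| * (z - x) ≤ δ := by
        have h6 : |r| * (z - x) ≤ |r| * (δ / (|r| + 1)) :=
          mul_le_mul_of_nonneg_left hz2.le (abs_nonneg r)
        have h7 : |r| * (δ / (|r| + 1)) ≤ δ := by
          rw [mul_div_assoc']
          rw [div_le_iff₀ (by positivity)]
          nlinarith [abs_nonneg r, hδpos]
        linarith
      rw [div_lt_iff₀ hzx]
      linarith
  have hall : ∀ᶠ z in nhdsWithin x (Set.Ioi x), ∀ j ∈ s, (g j z - F x) / (z - x) < r :=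
    (Filter.eventually_all_finset s).mpr key
  filter_upwards [hall, self_mem_nhdsWithin] with z hz hzx
  obtain ⟨j, hj, hFz⟩ := Finset.exists_mem_eq_sup' hs (fun i => g i z)
  rw [slope_def_field]
  have : F z = g j z := hFz
  rw [this]
  exact hz j hj

/-- Gradient estimate under CD(K,∞): exponential decay of Γu_t along the modified heat
equation ∂ₜu = Δu + Γu, and the resulting gradient bound on edges. -/
theorem gradient_estimate_CD_K_infty {V : Type*} [Fintype V] (q : V → V → ℝ)
    (hq : ∀ x y, 0 ≤ q x y) (hdiag : ∀ x, q x x = 0) (qmin K : ℝ) (hK : 0 ≤ K)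
    (hqmin_pos : 0 < qmin) (hqmin : ∀ x y, 0 < q x y → qmin ≤ q x y)
    (hCD : ∀ f : V → ℝ, ∀ x, K * gGamma q f x ≤ gGammaTwo q f x)
    (u : ℝ → V → ℝ)
    (hu : ∀ t ∈ Set.Ici (0 : ℝ), ∀ x, HasDerivWithinAt (fun s => u s x)
      (glap q (u t) x + gGamma q (u t) x) (Set.Ici 0) t)
    (h0 : (⨆ x, gGamma q (u 0) x) ≤ qmin / 2) :
    ∀ t ∈ Set.Ici (0 : ℝ),
      ((⨆ x, gGamma q (u t) x) ≤ Real.exp (-2 * K * t) * ⨆ x, gGamma q (u 0) x)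
      ∧ ∀ x y, 0 < q x y → |u t y - u t x| ≤ 1 := by
  classical
  cases isEmpty_or_nonempty V with
  | inl h =>
    intro t ht
    constructor
    · simp [Real.iSup_of_isEmpty]
    · intro x; exact (h.false x).elim
  | inr hne =>
  set γ : V → ℝ → ℝ := fun j t => gGamma q (u t) j with hγdef
  set F : ℝ → ℝ := fun t => Finset.univ.sup' Finset.univ_nonempty (fun j => γ j t) with hFdef
  have hFsup : ∀ t, (⨆ x, gGamma q (u t) x) = F t := fun t =>
    (Finset.sup'_univ_eq_ciSup _).symm
  set d : V → ℝ → ℝ := fun j t => ∑ y, q j y * (u t y - u t j) *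
    ((glap q (u t) y + gGamma q (u t) y) - (glap q (u t) j + gGamma q (u t) j)) with hddef
  have hder : ∀ t ∈ Set.Ici (0:ℝ), ∀ j, HasDerivWithinAt (γ j) (d j t) (Set.Ici 0) t :=
    fun t ht j => hasDeriv_gGamma q u hu ht j
  have hγle : ∀ t j, γ j t ≤ F t := fun t j => Finset.le_sup' (fun i => γ i t) (Finset.mem_univ j)
  have hFnonneg : ∀ t, 0 ≤ F t := fun t =>
    le_trans (gGamma_nonneg q hq (u t) (Classical.arbitrary V)) (hγle t _)
  have hγcont : ∀ j, ContinuousOn (γ j) (Set.Ici 0) :=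
    fun j t ht => (hder t ht j).continuousWithinAt
  have hFcont : ContinuousOn F (Set.Ici 0) :=
    ContinuousOn.finset_sup'_apply Finset.univ_nonempty (fun j _ => hγcont j)
  set Q : ℝ := ∑ p : V, ∑ z : V, q p z with hQdef
  have hQ0 : 0 ≤ Q := Finset.sum_nonneg fun p _ => Finset.sum_nonneg fun z _ => hq p z
  -- argmax-based upper Dini derivative
  have hAne : ∀ t, (Finset.univ.filter (fun j => γ j t = F t)).Nonempty := by
    intro t
    obtain ⟨j, hj, h⟩ := Finset.exists_mem_eq_sup' Finset.univ_nonempty (fun i => γ i t)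
    exact ⟨j, Finset.mem_filter.mpr ⟨hj, h.symm⟩⟩
  set D : ℝ → ℝ := fun t => (Finset.univ.filter (fun j => γ j t = F t)).sup' (hAne t)
    (fun j => d j t) with hDdef
  have hD_ex : ∀ t, ∃ j, γ j t = F t ∧ D t = d j t := by
    intro t
    obtain ⟨j, hj, h⟩ := Finset.exists_mem_eq_sup' (hAne t) (fun j => d j t)
    exact ⟨j, (Finset.mem_filter.mp hj).2, h⟩
  have hD_ge : ∀ t j, γ j t = F t → d j t ≤ D t := fun t j h =>
    Finset.le_sup' (fun i => d i t) (Finset.mem_filter.mpr ⟨Finset.mem_univ j, h⟩)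
  -- liminf slope hypothesis for the Gronwall-type comparison
  have hf' : ∀ x ∈ Set.Ici (0:ℝ), ∀ r, D x < r →
      ∃ᶠ z in nhdsWithin x (Set.Ioi x), slope F x z < r := by
    intro x hx r hr
    apply Filter.Eventually.frequently
    have := eventually_slope_sup'_lt Finset.univ Finset.univ_nonempty γ (fun j => d j x) x r
      (fun j _ => (hder x hx j).mono (Set.Ici_subset_Ici.mpr hx))
      (fun j _ hj => lt_of_le_of_lt (hD_ge x j hj) hr)
    exact this
  -- key differential inequality at the maximum point
  have hkey : ∀ x ∈ Set.Ici (0:ℝ), ∀ η, 0 ≤ η → η ≤ qmin / 2 → F x ≤ qmin / 2 + η →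
      D x ≤ -(2 * K) * F x + η * Q := by
    intro x hx η h1 h2 h3
    obtain ⟨j, hjmax, hDj⟩ := hD_ex x
    rw [hDj, ← hjmax]
    exact key_estimate q hq qmin K hK hqmin_pos hqmin hCD (u x) j
      (fun y => le_trans (hγle x y) (le_of_eq hjmax.symm)) η h1 h2
      (le_trans (le_of_eq hjmax) h3)
  have hF0 : F 0 ≤ qmin / 2 := by rw [← hFsup 0]; exact h0
  -- Stage 1: F t ≤ qmin/2 for all t ≥ 0
  have stage1 : ∀ t ∈ Set.Ici (0:ℝ), F t ≤ qmin / 2 := by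
    intro t ht
    rcases eq_or_lt_of_le (show (0:ℝ) ≤ t from ht) with h | h
    · rw [← h]; exact hF0
    · set C : ℝ := Q + 1 with hC
      have hCpos : 0 < C := by positivity
      have main : ∀ ε, 0 < ε → ε * Real.exp (C * t) ≤ qmin / 2 →
          F t ≤ qmin / 2 + ε * Real.exp (C * t) := by
        intro ε hε hεt
        set B : ℝ → ℝ := fun s => qmin / 2 + ε * Real.exp (C * s) with hB
        have hB' : ∀ x, HasDerivAt B (ε * (C * Real.exp (C * x))) x := by
          intro x
          have h1 : HasDerivAt (fun s : ℝ => C * s) C x := by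
            simpa using (hasDerivAt_id x).const_mul C
          have h2 : HasDerivAt (fun s : ℝ => Real.exp (C * s)) (Real.exp (C * x) * C) x :=
            (Real.hasDerivAt_exp (C * x)).comp x h1
          have h3 := (h2.const_mul ε).const_add (qmin / 2)
          refine h3.congr_deriv ?_
          ring
        have happ := image_le_of_liminf_slope_right_lt_deriv_boundary
          (f := F) (f' := D) (a := 0) (b := t)
          (hFcont.mono Set.Icc_subset_Ici_self)
          (fun x hx r hr => hf' x hx.1 r hr)
          (by
            simp only [hB]
            nlinarith [Real.exp_pos (C * (0:ℝ))])
          (B' := fun x => ε * (C * Real.exp (C * x))) hB'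
          (by
            intro x hx hFB
            set η : ℝ := ε * Real.exp (C * x) with hη
            have hη0 : 0 < η := by positivity
            have hησ : η ≤ qmin / 2 := by
              have : Real.exp (C * x) ≤ Real.exp (C * t) :=
                Real.exp_le_exp.mpr (by nlinarith [hx.1, hx.2, hCpos])
              nlinarith
            have hFx : F x ≤ qmin / 2 + η := le_of_eq hFB
            have hk := hkey x hx.1 η hη0.le hησ hFx
            have : -(2*K) * F x ≤ 0 := by
              have := hFnonneg x
              nlinarith
            calc D x ≤ -(2*K) * F x + η * Q := hk
              _ ≤ η * Q := by linarith
              _ < η * C := by nlinarith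
              _ = ε * (C * Real.exp (C * x)) := by rw [hη]; ring)
        have := happ (Set.right_mem_Icc.mpr h.le)
        simpa [hB] using this
      by_contra hcon
      push_neg at hcon
      set E : ℝ := Real.exp (C * t) with hE
      have hEpos : 0 < E := Real.exp_pos _
      set ε : ℝ := min ((F t - qmin/2)/2) (qmin/2) / E with hε
      have hεpos : 0 < ε := by
        apply div_pos _ hEpos
        apply lt_min (by linarith) (by linarith)
      have hεE : ε * E ≤ qmin / 2 := by
        rw [hε, div_mul_cancel₀ _ hEpos.ne']
        exact min_le_right _ _
      have := main ε hεpos hεE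
      have h9 : ε * E ≤ (F t - qmin/2)/2 := by
        rw [hε, div_mul_cancel₀ _ hEpos.ne']
        exact min_le_left _ _
      linarith
  -- edge bound whenever F t ≤ qmin/2
  have edge : ∀ t, F t ≤ qmin / 2 → ∀ x y, 0 < q x y → |u t y - u t x| ≤ 1 := by
    intro t hFt x y hxy
    have h1 : q x y * (u t y - u t x) * (u t y - u t x) ≤ 2 * gGamma q (u t) x :=
      gGamma_single q hq (u t) x y
    have h2 : gGamma q (u t) x ≤ F t := hγle t x
    have hq' := hqmin x y hxy
    have habs : (u t y - u t x) * (u t y - u t x) ≤ 1 := by nlinarith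
    exact abs_le_one_iff_mul_self_le_one.mpr habs
  -- Stage 2: F t ≤ exp(-2Kt) * F 0
  have stage2 : ∀ t ∈ Set.Ici (0:ℝ), F t ≤ Real.exp (-2 * K * t) * F 0 := by
    intro t ht
    rcases eq_or_lt_of_le (show (0:ℝ) ≤ t from ht) with h | h
    · rw [← h]; simp
    · have main : ∀ ε, 0 < ε → F t ≤ Real.exp (-2 * K * t) * F 0 + ε * Real.exp t := by
        intro ε hε
        set B : ℝ → ℝ := fun s => Real.exp (-2 * K * s) * F 0 + ε * Real.exp s with hB
        have hB' : ∀ x, HasDerivAt B ((-2 * K) * Real.exp (-2 * K * x) * F 0 + ε * Real.exp x) x := by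
          intro x
          have h1 : HasDerivAt (fun s : ℝ => -2 * K * s) (-2 * K) x := by
            simpa using (hasDerivAt_id x).const_mul (-2 * K)
          have h2 : HasDerivAt (fun s : ℝ => Real.exp (-2 * K * s))
              (Real.exp (-2 * K * x) * (-2 * K)) x :=
            (Real.hasDerivAt_exp (-2 * K * x)).comp x h1
          have h3 := (h2.mul_const (F 0)).add ((Real.hasDerivAt_exp x).const_mul ε)
          refine h3.congr_deriv ?_
          ring
        have happ := image_le_of_liminf_slope_right_lt_deriv_boundary
          (f := F) (f' := D) (a := 0) (b := t)
          (hFcont.mono Set.Icc_subset_Ici_self)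
          (fun x hx r hr => hf' x hx.1 r hr)
          (by
            simp only [hB]
            have := Real.exp_pos (0:ℝ)
            simp only [mul_zero, Real.exp_zero]
            nlinarith)
          (B' := fun x => (-2 * K) * Real.exp (-2 * K * x) * F 0 + ε * Real.exp x) hB'
          (by
            intro x hx hFB
            have hFx : F x ≤ qmin / 2 + 0 := by
              rw [add_zero]; exact stage1 x hx.1
            have hk := hkey x hx.1 0 le_rfl (by linarith) hFx
            rw [zero_mul, add_zero] at hk
            rw [hFB] at hk
            simp only [hB] at hk ⊢
            have e1 : 0 < Real.exp x := Real.exp_pos x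
            have e2 : 0 ≤ 2 * K * (ε * Real.exp x) := by positivity
            nlinarith)
          (Set.right_mem_Icc.mpr h.le)
        simpa [hB] using happ
      by_contra hcon
      push_neg at hcon
      set gap : ℝ := F t - Real.exp (-2 * K * t) * F 0 with hgap
      have hgappos : 0 < gap := by linarith
      have := main (gap / (2 * Real.exp t)) (by positivity)
      rw [div_mul_eq_mul_div, mul_div_assoc] at this
      have hx1 : Real.exp t / (2 * Real.exp t) = 1/2 := by
        field_simp
      rw [hx1] at this
      linarith
  intro t ht
  constructor
  · rw [hFsup t, hFsup 0]
    exact stage2 t ht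
  · intro x y hxy
    apply edge t _ x y hxy
    have hexp : Real.exp (-2 * K * t) ≤ 1 := by
      apply Real.exp_le_one_iff.mpr
      have ht' : (0:ℝ) ≤ t := ht
      nlinarith
    calc F t ≤ Real.exp (-2 * K * t) * F 0 := stage2 t ht
      _ ≤ 1 * F 0 := mul_le_mul_of_nonneg_right hexp (hFnonneg 0)
      _ = F 0 := one_mul _
      _ ≤ qmin / 2 := hF0
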